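/- Let SC_k^{n,4} = (s_i)_{i=0}^{3} be a simple closed k-curve with 4 elements in ℤⁿ, n ≥ 2, and let p : ℤ → {s₀,s₁,s₂,s₃} be given by p(t) = s_{t mod 4}, where ℤ carries the 2-adjacency. Then p is a local (2,k)-isomorphism. -/

import Mathlib

/-- Two points of `ℤⁿ` are `k(t,n)`-adjacent if they are distinct, at most `t` of their
coordinates differ by exactly `1` in absolute value, and all other coordinates coincide. -/
def DigAdj {n : ℕ} (t : ℕ) (p q : Fin n → ℤ) : Prop :=
  p ≠ q ∧ (∀ i, p i = q i ∨ |p i - q i| = 1) ∧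
    (Finset.univ.filter fun i => p i ≠ q i).card ≤ t

/-- The adjacency relation induced on a digital image `X ⊆ ℤⁿ`. -/
def adjOn {n : ℕ} (t : ℕ) (X : Set (Fin n → ℤ)) (x y : X) : Prop :=
  DigAdj t (x : Fin n → ℤ) (y : Fin n → ℤ)

/-- Digital `(k₁,k₂)`-continuity of a map between digital images. -/
def DigContinuous {n₁ n₂ : ℕ} (t₁ t₂ : ℕ) (X : Set (Fin n₁ → ℤ)) (Y : Set (Fin n₂ → ℤ))
    (f : X → Y) : Prop :=
  ∀ x x' : X, adjOn t₁ X x x' → f x = f x' ∨ adjOn t₂ Y (f x) (f x')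

/-- There is a `k`-path of length at most `ε` (w.r.t. an adjacency `adj`) from `x` to `y`;
equivalently, the length `l_k(x,y)` of a shortest `k`-path from `x` to `y` is at most `ε`. -/
def reachesIn {α : Type*} (adj : α → α → Prop) (x y : α) (ε : ℕ) : Prop :=
  ∃ l, l ≤ ε ∧ ∃ c : ℕ → α, c 0 = x ∧ c l = y ∧ ∀ i, i < l → adj (c i) (c (i + 1))

/-- The digital neighborhood `N_k(x₀, ε) = {x : l_k(x₀,x) ≤ ε} ∪ {x₀}`. -/
def Nbd {α : Type*} (adj : α → α → Prop) (x₀ : α) (ε : ℕ) : Set α :=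
  {x | reachesIn adj x₀ x ε} ∪ {x₀}

/-- `f` maps `A` `(k₁,k₂)`-isomorphically onto `B`: the restriction of `f` is a bijection
from `A` onto `B` which is `(k₁,k₂)`-continuous and whose inverse is `(k₂,k₁)`-continuous. -/
def IsIsoOn {α β : Type*} (adjA : α → α → Prop) (adjB : β → β → Prop)
    (f : α → β) (A : Set α) (B : Set β) : Prop :=
  Set.BijOn f A B ∧
    (∀ x ∈ A, ∀ x' ∈ A, adjA x x' → f x = f x' ∨ adjB (f x) (f x')) ∧
    (∀ x ∈ A, ∀ x' ∈ A, adjB (f x) (f x') → x = x' ∨ adjA x x')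

/-- A local `(k₁,k₂)`-isomorphism: for every `x ∈ X`, `h` maps `N_{k₁}(x,1)`
`(k₁,k₂)`-isomorphically onto `N_{k₂}(h(x),1)`. -/
def LocalIso {n₁ n₂ : ℕ} (t₁ t₂ : ℕ) (X : Set (Fin n₁ → ℤ)) (Y : Set (Fin n₂ → ℤ))
    (h : X → Y) : Prop :=
  ∀ x : X, IsIsoOn (adjOn t₁ X) (adjOn t₂ Y) h
    (Nbd (adjOn t₁ X) x 1) (Nbd (adjOn t₂ Y) (h x) 1)

/-- A simple closed `k`-curve `SC_k^{n,l}` with `l` elements in `ℤⁿ`: a sequence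
`(s_i)_{i=0}^{l-1}` of distinct points such that `s_i` and `s_j` are `k`-adjacent
if and only if `i - j ≡ ±1 (mod l)`. -/
def IsSC {n : ℕ} (t l : ℕ) (s : ZMod l → (Fin n → ℤ)) : Prop :=
  Function.Injective s ∧
    ∀ i j : ZMod l, DigAdj t (s i) (s j) ↔ (i = j + 1 ∨ j = i + 1)


/-! On `ℤ` the closed 1-neighbourhood of `a` is `{a - 1, a, a + 1}`, and `s` is an isomorphism
from the cycle `ℤ/l` onto its image. Two points of that neighbourhood differ by at most `2`, so once
`l ≥ 4` a congruence mod `l` between them, or between one of them and a neighbour of the other,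
is already an equality in `ℤ`; hence reduction mod `l` identifies the neighbourhood of `a` with
that of its class, adjacency included. -/

open Set

lemma mem_nbd_one_iff {α : Type*} {adj : α → α → Prop} {x y : α} :
    y ∈ Nbd adj x 1 ↔ y = x ∨ adj x y := by
  constructor
  · rintro (⟨l, hl, c, rfl, rfl, hc⟩ | h)
    · interval_cases l
      · exact Or.inl rfl
      · exact Or.inr (hc 0 zero_lt_one)
    · exact Or.inl h
  · rintro (rfl | h)
    · exact Or.inr rfl
    · refine Or.inl ⟨1, le_rfl, fun i => if i = 0 then x else y, rfl, rfl, ?_⟩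
      intro i hi
      obtain rfl : i = 0 := Nat.lt_one_iff.mp hi
      simpa using h

lemma DigContinuous.mapsTo_nbd_one {n₁ n₂ t₁ t₂ : ℕ} {X : Set (Fin n₁ → ℤ)}
    {Y : Set (Fin n₂ → ℤ)} {f : X → Y} (hf : DigContinuous t₁ t₂ X Y f) (x : X) :
    MapsTo f (Nbd (adjOn t₁ X) x 1) (Nbd (adjOn t₂ Y) (f x) 1) := by
  intro u hu
  rw [mem_nbd_one_iff] at hu ⊢
  rcases hu with rfl | hu
  · exact Or.inl rfl
  · exact (hf x u hu).imp Eq.symm id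

lemma digAdj_one_iff_of_fin_one {p q : Fin 1 → ℤ} :
    DigAdj 1 p q ↔ p 0 = q 0 + 1 ∨ q 0 = p 0 + 1 := by
  have hpq : p = q ↔ p 0 = q 0 := by rw [funext_iff, Fin.forall_fin_one]
  have habs : |p 0 - q 0| = 1 ↔ p 0 = q 0 + 1 ∨ q 0 = p 0 + 1 := by
    rw [abs_eq zero_le_one]; omega
  constructor
  · rintro ⟨hne, hcoord, -⟩
    exact habs.mp ((hcoord 0).resolve_left (mt hpq.mpr hne))
  · intro h
    refine ⟨fun he => ?_, Fin.forall_fin_one.mpr (Or.inr (habs.mpr h)), ?_⟩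
    · rw [hpq.mp he] at h
      omega
    · exact (Finset.card_filter_le _ _).trans (by simp)

lemma mem_nbd_univ_fin_one_iff {x u : (univ : Set (Fin 1 → ℤ))} :
    u ∈ Nbd (adjOn 1 univ) x 1 ↔ |(u : Fin 1 → ℤ) 0 - (x : Fin 1 → ℤ) 0| ≤ 1 := by
  rw [mem_nbd_one_iff, adjOn, digAdj_one_iff_of_fin_one, Subtype.ext_iff, funext_iff,
    Fin.forall_fin_one, abs_le]
  omega

theorem Int.eq_of_intCast_zmod_eq {l : ℕ} {u v : ℤ} (h : (u : ZMod l) = v) (huv : |u - v| < l) :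
    u = v :=
  sub_eq_zero.mp <| Int.eq_zero_of_abs_lt_dvd
    ((ZMod.intCast_eq_intCast_iff_dvd_sub v u l).mp h.symm) huv

def scWrap {n l : ℕ} (s : ZMod l → Fin n → ℤ) : ↥(univ : Set (Fin 1 → ℤ)) → range s :=
  fun x => ⟨s (((x : Fin 1 → ℤ) 0 : ℤ) : ZMod l), mem_range_self _⟩

namespace IsSC

variable {n t l : ℕ} {s : ZMod l → Fin n → ℤ}

theorem digContinuous_scWrap (hs : IsSC t l s) :
    DigContinuous 1 t univ (range s) (scWrap s) := by
  intro u v huv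
  refine Or.inr ((hs.2 _ _).mpr ?_)
  rcases digAdj_one_iff_of_fin_one.mp huv with h | h
  · exact Or.inl (by rw [h]; push_cast; rfl)
  · exact Or.inr (by rw [h]; push_cast; rfl)

theorem surjOn_scWrap_nbd_one (hs : IsSC t l s) (x : ↥(univ : Set (Fin 1 → ℤ))) :
    SurjOn (scWrap s) (Nbd (adjOn 1 univ) x 1) (Nbd (adjOn t (range s)) (scWrap s x) 1) := by
  set a := (x : Fin 1 → ℤ) 0
  rintro ⟨_, j, rfl⟩ hy
  rcases mem_nbd_one_iff.mp hy with hy | hy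
  · exact ⟨x, mem_nbd_one_iff.mpr (Or.inl rfl), hy.symm⟩
  have hj : j = ((a - 1 : ℤ) : ZMod l) ∨ j = ((a + 1 : ℤ) : ZMod l) := by
    push_cast
    rcases (hs.2 _ _).mp hy with h | h
    · exact Or.inl (by rw [h]; ring)
    · exact Or.inr h
  obtain ⟨b, hb, rfl⟩ : ∃ b : ℤ, |b - a| ≤ 1 ∧ j = (b : ZMod l) := by
    rcases hj with rfl | rfl
    · exact ⟨a - 1, by simp, rfl⟩
    · exact ⟨a + 1, by simp, rfl⟩
  exact ⟨⟨fun _ => b, trivial⟩, mem_nbd_univ_fin_one_iff.mpr hb, rfl⟩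

theorem localIso_scWrap (hs : IsSC t l s) (hl : 4 ≤ l) :
    LocalIso 1 t univ (range s) (scWrap s) := by
  intro x
  have hclose : ∀ u ∈ Nbd (adjOn 1 univ) x 1, ∀ v ∈ Nbd (adjOn 1 univ) x 1,
      |(u : Fin 1 → ℤ) 0 - (v : Fin 1 → ℤ) 0| ≤ 2 := by
    intro u hu v hv
    have hu := abs_le.mp (mem_nbd_univ_fin_one_iff.mp hu)
    have hv := abs_le.mp (mem_nbd_univ_fin_one_iff.mp hv)
    exact abs_le.mpr ⟨by omega, by omega⟩
  refine ⟨⟨hs.digContinuous_scWrap.mapsTo_nbd_one x, ?_, hs.surjOn_scWrap_nbd_one x⟩,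
    fun u _ v _ huv => hs.digContinuous_scWrap u v huv, ?_⟩
  · intro u hu v hv huv
    have h := Int.eq_of_intCast_zmod_eq (hs.1 (Subtype.ext_iff.mp huv))
      ((hclose u hu v hv).trans_lt (by omega))
    exact Subtype.ext (funext (Fin.forall_fin_one.mpr h))
  · intro u hu v hv huv
    have hlt : ∀ b c : ℤ, |b - c| ≤ 2 → |b - (c + 1)| < l := fun b c h => by
      have := abs_le.mp h
      exact abs_lt.mpr ⟨by omega, by omega⟩
    refine Or.inr (digAdj_one_iff_of_fin_one.mpr ?_)
    rcases (hs.2 _ _).mp huv with h | h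
    · exact Or.inl (Int.eq_of_intCast_zmod_eq (by push_cast; exact h) (hlt _ _ (hclose u hu v hv)))
    · exact Or.inr (Int.eq_of_intCast_zmod_eq (by push_cast; exact h) (hlt _ _ (hclose v hv u hu)))

end IsSC

theorem sc4_covering_localIso_general
    {n t : ℕ}
    (s : ZMod 4 → (Fin n → ℤ)) (hs : IsSC t 4 s) :
    LocalIso 1 t (Set.univ : Set (Fin 1 → ℤ)) (Set.range s)
      (fun x => ⟨s (((x : Fin 1 → ℤ) 0 : ℤ) : ZMod 4), Set.mem_range_self _⟩) :=
  hs.localIso_scWrap le_rfl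

/-- for `l = 4`, the map `p : ℤ → SC_k^{n,4}`, `p(t) = s_{t mod 4}`,
where `ℤ = ℤ¹` carries the `2 = k(1,1)`-adjacency, is a local `(2,k)`-isomorphism. -/
theorem sc4_covering_localIso
    {n t : ℕ} (hn : 2 ≤ n) (ht : 1 ≤ t) (htn : t ≤ n)
    (s : ZMod 4 → (Fin n → ℤ)) (hs : IsSC t 4 s) :
    LocalIso 1 t (Set.univ : Set (Fin 1 → ℤ)) (Set.range s)
      (fun x => ⟨s (((x : Fin 1 → ℤ) 0 : ℤ) : ZMod 4), Set.mem_range_self _⟩) :=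
  sc4_covering_localIso_general s hs
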